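/- Lemma 1: Let x ≥ 0, y ≥ 0 with x + y > 0, set a = (x+y)/2 and g = √(xy), and suppose a < z. Then there exists θ with g ≤ θ ≤ a such that ∫₀^∞ dt/(√((t+x)(t+y))·(t+z)) = (1/(z−θ))·ln(2z/(a+g)); moreover the inequalities g ≤ θ ≤ a are equalities iff x = y. -/

import Mathlib

open MeasureTheory Real

open Set Filter Topology

section aux
variable {c p q : ℝ}

lemma aux_hasDerivAt (hp : 0 < c + p) (hq : p < q) {s : ℝ} (hs : s ∈ Ici c) :
    HasDerivAt (fun s => (2/(q-p)) * (Real.log (s+p) - Real.log (s+q)))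
      (2 / ((s+p)*(s+q))) s := by
  have hsp : 0 < s + p := by have := hs.out; linarith
  have hsq : 0 < s + q := by linarith
  have hqp : q - p ≠ 0 := by linarith
  have h1 : HasDerivAt (fun s : ℝ => Real.log (s + p)) (1/(s+p)) s := by
    simpa using ((hasDerivAt_id s).add_const p).log hsp.ne'
  have h2 : HasDerivAt (fun s : ℝ => Real.log (s + q)) (1/(s+q)) s := by
    simpa using ((hasDerivAt_id s).add_const q).log hsq.ne'
  have := ((h1.sub h2).const_mul (2/(q-p)))
  refine this.congr_deriv ?_
  symm
  rw [div_sub_div _ _ hsp.ne' hsq.ne']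
  rw [div_mul_div_comm]
  rw [div_eq_div_iff (by positivity) (by positivity)]
  ring

lemma aux_nonneg (hp : 0 < c + p) (hq : p < q) {s : ℝ} (hs : s ∈ Ioi c) :
    0 ≤ 2 / ((s+p)*(s+q)) := by
  have hsp : 0 < s + p := by have := hs.out; linarith
  have hsq : 0 < s + q := by linarith
  positivity

lemma aux_tendsto (hq : p < q) :
    Tendsto (fun s => (2/(q-p)) * (Real.log (s+p) - Real.log (s+q))) atTop (𝓝 0) := by
  have h1 : Tendsto (fun s : ℝ => (s+p)/(s+q)) atTop (𝓝 1) := by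
    have : Tendsto (fun s : ℝ => 1 - (q-p)/(s+q)) atTop (𝓝 (1 - 0)) :=
      tendsto_const_nhds.sub (Tendsto.div_atTop tendsto_const_nhds
        (tendsto_atTop_add_const_right _ q tendsto_id))
    rw [sub_zero] at this
    apply this.congr'
    filter_upwards [eventually_gt_atTop (max (-p) (-q))] with s hs
    have hsp : 0 < s + p := by have := (lt_of_le_of_lt (le_max_left _ _) hs); linarith
    have hsq : 0 < s + q := by have := (lt_of_le_of_lt (le_max_right _ _) hs); linarith
    field_simp
    ring
  have h2 : Tendsto (fun s : ℝ => Real.log ((s+p)/(s+q))) atTop (𝓝 0) := by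
    have := (Real.continuousAt_log one_ne_zero).tendsto.comp h1
    simpa [Function.comp_def] using this
  have h3 : Tendsto (fun s : ℝ => Real.log (s+p) - Real.log (s+q)) atTop (𝓝 0) := by
    apply h2.congr'
    filter_upwards [eventually_gt_atTop (max (-p) (-q))] with s hs
    have hsp : 0 < s + p := by have := (lt_of_le_of_lt (le_max_left _ _) hs); linarith
    have hsq : 0 < s + q := by have := (lt_of_le_of_lt (le_max_right _ _) hs); linarith
    rw [Real.log_div hsp.ne' hsq.ne']
  simpa using h3.const_mul (2/(q-p))

lemma aux_integrableOn (hp : 0 < c + p) (hq : p < q) :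
    IntegrableOn (fun s => 2 / ((s+p)*(s+q))) (Ioi c) :=
  integrableOn_Ioi_deriv_of_nonneg' (fun s hs => aux_hasDerivAt hp hq hs)
    (fun s hs => aux_nonneg hp hq hs) (aux_tendsto hq)

lemma aux_integral (hp : 0 < c + p) (hq : p < q) :
    ∫ s in Ioi c, 2 / ((s+p)*(s+q)) = (2/(q-p)) * Real.log ((c+q)/(c+p)) := by
  rw [integral_Ioi_of_hasDerivAt_of_nonneg' (fun s hs => aux_hasDerivAt hp hq hs)
    (fun s hs => aux_nonneg hp hq hs) (aux_tendsto hq)]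
  have hcq : 0 < c + q := by linarith
  rw [Real.log_div hcq.ne' hp.ne']
  ring

end aux
open MeasureTheory Real Set Filter Topology

lemma subst_lemma (x y z : ℝ) (hx : 0 ≤ x) (hy : 0 ≤ y) (hxy : 0 < x + y)
    (hz : (x + y) / 2 < z) :
    (∫ t in Set.Ioi (0:ℝ), 1 / (Real.sqrt ((t + x) * (t + y)) * (t + z))) =
      ∫ s in Set.Ioi ((x + y) / 2 + Real.sqrt (x * y)),
        2 / (s^2 + 2*(z - (x + y)/2)*s + ((x - y)/2)^2) := by
  set a := (x + y) / 2 with ha_def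
  set g := Real.sqrt (x * y) with hg_def
  set A := ((x - y)/2)^2 with hA_def
  have ha : 0 < a := by simp [ha_def]; linarith
  have hg0 : 0 ≤ g := Real.sqrt_nonneg _
  have hg2 : g^2 = x * y := Real.sq_sqrt (mul_nonneg hx hy)
  have hA' : A = a^2 - g^2 := by rw [hA_def, ha_def]; linear_combination hg2
  have hA0 : 0 ≤ A := sq_nonneg _
  have hga : g ≤ a := by nlinarith
  set φ : ℝ → ℝ := fun t => t + a + Real.sqrt ((t + x) * (t + y)) with hφ_def
  have hP : ∀ t ∈ Set.Ioi (0:ℝ), 0 < (t + x) * (t + y) := by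
    intro t ht
    have : 0 < t := ht
    have h1 : 0 < t + x := by linarith
    have h2 : 0 < t + y := by linarith
    positivity
  have hSpos : ∀ t ∈ Set.Ioi (0:ℝ), 0 < Real.sqrt ((t + x) * (t + y)) :=
    fun t ht => Real.sqrt_pos.2 (hP t ht)
  have hderiv : ∀ t ∈ Set.Ioi (0:ℝ),
      HasDerivAt φ (φ t / Real.sqrt ((t + x) * (t + y))) t := by
    intro t ht
    have hS := hSpos t ht
    have hPd : HasDerivAt (fun t : ℝ => (t + x) * (t + y)) ((t + y) + (t + x)) t := by
      have := (((hasDerivAt_id t).add_const x).mul ((hasDerivAt_id t).add_const y))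
      exact this.congr_deriv (by simp only [id]; ring)
    have hsq : HasDerivAt (fun t : ℝ => Real.sqrt ((t + x) * (t + y)))
        (((t + y) + (t + x)) / (2 * Real.sqrt ((t + x) * (t + y)))) t :=
      hPd.sqrt (hP t ht).ne'
    have := ((hasDerivAt_id t).add_const a).add hsq
    refine this.congr_deriv ?_
    symm
    rw [hφ_def]
    field_simp
    ring
  have hmono : StrictMonoOn φ (Set.Ioi (0:ℝ)) := by
    intro t1 h1 t2 h2 hlt
    have hPle : (t1 + x) * (t1 + y) ≤ (t2 + x) * (t2 + y) := by
      have ht1 : (0:ℝ) < t1 := h1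
      nlinarith
    have := Real.sqrt_le_sqrt hPle
    simp only [hφ_def]
    linarith
  have himage : φ '' Set.Ioi (0:ℝ) = Set.Ioi (a + g) := by
    ext s
    constructor
    · rintro ⟨t, ht, rfl⟩
      have htpos : (0:ℝ) < t := ht
      have h1 : x * y ≤ (t + x) * (t + y) := by nlinarith
      have h2 : g ≤ Real.sqrt ((t + x) * (t + y)) := by
        rw [hg_def]; exact Real.sqrt_le_sqrt h1
      simp only [hφ_def, Set.mem_Ioi]
      linarith
    · intro hs
      have hs' : a + g < s := hs
      have hspos : 0 < s := by linarith
      refine ⟨(s + A/s)/2 - a, ?_, ?_⟩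
      · simp only [Set.mem_Ioi]
        rw [hA']
        have h1 : 0 < s - a - g := by linarith
        have h2 : 0 < s - a + g := by linarith
        have : (s - a - g) * (s - a + g) = s^2 - 2*a*s + (a^2 - g^2) := by ring
        have h3 : 0 < s^2 - 2*a*s + (a^2 - g^2) := by nlinarith
        have hq : (s + (a^2 - g^2)/s)/2 - a = (s^2 - 2*a*s + (a^2 - g^2))/(2*s) := by
          field_simp; ring
        rw [hq]
        exact div_pos h3 (by linarith)
      · have hs2A : A ≤ s^2 := by
          rw [hA']; nlinarith
        have hnon : 0 ≤ (s - A/s)/2 := by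
          have : 0 ≤ s - A/s := by
            rw [sub_nonneg, div_le_iff₀ hspos]
            nlinarith
          linarith
        have key : ((s + A/s)/2 - a + x) * ((s + A/s)/2 - a + y) = ((s - A/s)/2)^2 := by
          rw [hA_def, ha_def]
          field_simp
          ring
        simp only [hφ_def]
        rw [key, Real.sqrt_sq hnon]
        field_simp
        ring
  rw [← himage, integral_image_eq_integral_abs_deriv_smul measurableSet_Ioi
    (fun t ht => (hderiv t ht).hasDerivWithinAt) hmono.injOn]
  refine setIntegral_congr_fun measurableSet_Ioi (fun t ht => ?_)
  have htpos : (0:ℝ) < t := ht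
  have hS := hSpos t ht
  have hS2 : (Real.sqrt ((t + x) * (t + y)))^2 = (t + x) * (t + y) := by
    rw [Real.sq_sqrt (hP t ht).le]
  have hφpos : 0 < φ t := by
    simp only [hφ_def]; linarith
  have htz : 0 < t + z := by linarith
  have habs : |φ t / Real.sqrt ((t + x) * (t + y))| = φ t / Real.sqrt ((t + x) * (t + y)) :=
    abs_of_pos (div_pos hφpos hS)
  rw [habs, smul_eq_mul]
  have hDφ : (φ t)^2 + 2*(z - a)*(φ t) + A = 2*(φ t)*(t + z) := by
    simp only [hφ_def, hA_def, ha_def]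
    linear_combination hS2
  rw [hDφ]
  field_simp

set_option maxHeartbeats 1000000 in
/-- Lemma 1 of Carlson–Gustafson. -/
theorem lemma1 (x y z : ℝ) (hx : 0 ≤ x) (hy : 0 ≤ y) (hxy : 0 < x + y)
    (hz : (x + y) / 2 < z) :
    ∃ θ : ℝ, Real.sqrt (x * y) ≤ θ ∧ θ ≤ (x + y) / 2 ∧
      (∫ t in Set.Ioi (0:ℝ), 1 / (Real.sqrt ((t + x) * (t + y)) * (t + z))) =
        (1 / (z - θ)) * Real.log (2 * z / ((x + y) / 2 + Real.sqrt (x * y))) ∧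
      (x ≠ y → Real.sqrt (x * y) < θ ∧ θ < (x + y) / 2) := by
  have hsub := subst_lemma x y z hx hy hxy hz
  set a := (x + y) / 2 with ha_def
  set g := Real.sqrt (x * y) with hg_def
  set A := ((x - y)/2)^2 with hA_def
  clear_value a g A
  have ha : 0 < a := by rw [ha_def]; linarith
  have hg0 : 0 ≤ g := by rw [hg_def]; exact Real.sqrt_nonneg _
  have hg2 : g^2 = x * y := by rw [hg_def]; exact Real.sq_sqrt (mul_nonneg hx hy)
  have hA' : A = a^2 - g^2 := by rw [hA_def, ha_def]; linear_combination hg2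
  have hA0 : 0 ≤ a^2 - g^2 := by rw [← hA', hA_def]; exact sq_nonneg _
  have hga : g ≤ a := by nlinarith [hg2, sq_nonneg (x - y), hg0, ha]
  have haz : a < z := hz
  have hzpos : 0 < z := lt_trans ha haz
  have hs0pos : 0 < a + g := by linarith
  have h2z : a + g < 2 * z := by linarith
  set c := 2 * z - a - g with hc_def
  set α := -(a^2 - g^2)/c with hα_def
  set β := α + 2*(z - a) with hβ_def
  clear_value c α β
  have hc : 0 < c := by rw [hc_def]; linarith
  have hcne : (2*z - a - g) ≠ 0 := by linarith
  have hαβ : α < β := by rw [hβ_def]; linarith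
  have hs0α : 0 < (a + g) + α := by
    have h1 : (a + g) + α = (a + g) * (2*(z - a)) / (2*z - a - g) := by
      rw [hα_def, hc_def]; field_simp
      ring
    rw [h1]
    exact div_pos (mul_pos hs0pos (by linarith)) (by linarith)
  have hratio : ((a + g) + β) / ((a + g) + α) = 2*z/(a + g) := by
    rw [div_eq_div_iff hs0α.ne' hs0pos.ne']
    rw [hβ_def, hα_def, hc_def]
    field_simp
    ring
  set L := Real.log (2*z/(a + g)) with hL_def
  clear_value L
  have hL : 0 < L := by
    rw [hL_def]; exact Real.log_pos ((one_lt_div hs0pos).2 h2z)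
  -- key comparison identity
  have hkey : ∀ s : ℝ, (s^2 + 2*(z - a)*s + A) - (s + α)*(s + β)
      = ((a^2 - g^2) * (c^2 - (a^2-g^2) + 2*(z-a)*c + 2*c*s))/c^2 := by
    intro s
    rw [hA', hβ_def, hα_def, hc_def]
    field_simp
    ring
  have hbr : ∀ s ∈ Set.Ioi (a + g), 0 < c^2 - (a^2-g^2) + 2*(z-a)*c + 2*c*s := by
    intro s hs
    have hs' : a + g < s := hs
    have hp1 : 0 < z * (4*z - 3*a - g) := mul_pos hzpos (by linarith)
    have hp2 : 0 < c * (s - (a + g)) := mul_pos hc (by linarith)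
    rw [hc_def] at hp2 ⊢
    nlinarith [hp1, hp2]
  have hD1 : ∀ s ∈ Set.Ioi (a + g), (s + α)*(s + β) ≤ s^2 + 2*(z - a)*s + A := by
    intro s hs
    have h := hkey s
    have h2 := div_nonneg (mul_nonneg hA0 (hbr s hs).le) (sq_nonneg c)
    linarith
  have hprodpos : ∀ s ∈ Set.Ioi (a + g), 0 < (s + α)*(s + β) := by
    intro s hs
    have hs' : a + g < s := hs
    have h1 : 0 < s + α := by linarith
    have h2 : 0 < s + β := by linarith
    positivity
  have hDpos : ∀ s ∈ Set.Ioi (a + g), 0 < s^2 + 2*(z - a)*s + A :=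
    fun s hs => lt_of_lt_of_le (hprodpos s hs) (hD1 s hs)
  have hD2 : ∀ s ∈ Set.Ioi (a + g), s^2 + 2*(z - a)*s + A ≤ (s + 0)*(s + c) := by
    intro s hs
    have hs' : a + g < s := hs
    have h1 : 0 ≤ (a - g) * (s - (a + g)) := mul_nonneg (by linarith) (by linarith)
    rw [hA', hc_def]
    nlinarith [h1]
  -- integrability
  have hint1 : IntegrableOn (fun s => 2/((s + 0)*(s + c))) (Set.Ioi (a + g)) :=
    aux_integrableOn (by simpa using hs0pos) hc
  have hint2 : IntegrableOn (fun s => 2/((s + α)*(s + β))) (Set.Ioi (a + g)) :=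
    aux_integrableOn hs0α hαβ
  have hcontG : ContinuousOn (fun s : ℝ => 2 / (s^2 + 2*(z - a)*s + A)) (Set.Ioi (a + g)) := by
    apply ContinuousOn.div continuousOn_const (by fun_prop)
    exact fun s hs => (hDpos s hs).ne'
  have hintG : IntegrableOn (fun s : ℝ => 2 / (s^2 + 2*(z - a)*s + A)) (Set.Ioi (a + g)) := by
    apply Integrable.mono hint2 (hcontG.aestronglyMeasurable measurableSet_Ioi)
    rw [ae_restrict_iff' measurableSet_Ioi]
    refine ae_of_all _ (fun s hs => ?_)
    rw [Real.norm_eq_abs, Real.norm_eq_abs,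
      abs_of_nonneg (div_pos two_pos (hDpos s hs)).le,
      abs_of_nonneg (div_pos two_pos (hprodpos s hs)).le]
    exact div_le_div_of_nonneg_left two_pos.le (hprodpos s hs) (hD1 s hs)
  -- integral values
  have hval1 : ∫ s in Set.Ioi (a + g), 2/((s + 0)*(s + c)) = (2/c) * L := by
    rw [aux_integral (by simpa using hs0pos) hc,
      show (a + g) + c = 2*z by rw [hc_def]; ring,
      show (a + g) + (0:ℝ) = a + g by ring, hL_def]
    norm_num
  have hval2 : ∫ s in Set.Ioi (a + g), 2/((s + α)*(s + β)) = (1/(z - a)) * L := by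
    rw [aux_integral hs0α hαβ, hL_def, hratio]
    congr 1
    rw [hβ_def]
    have hza : z - a ≠ 0 := by linarith
    field_simp
    ring
  -- bounds
  obtain ⟨J, hJ_def⟩ : ∃ J, (∫ s in Set.Ioi (a + g), 2 / (s^2 + 2*(z - a)*s + A)) = J :=
    ⟨_, rfl⟩
  rw [hJ_def] at hsub
  have hlow : (2/c) * L ≤ J := by
    rw [← hval1, ← hJ_def]
    apply setIntegral_mono_on hint1 hintG measurableSet_Ioi
    intro s hs
    exact div_le_div_of_nonneg_left two_pos.le (hDpos s hs) (hD2 s hs)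
  have hup : J ≤ (1/(z - a)) * L := by
    rw [← hval2, ← hJ_def]
    apply setIntegral_mono_on hintG hint2 measurableSet_Ioi
    intro s hs
    exact div_le_div_of_nonneg_left two_pos.le (hprodpos s hs) (hD1 s hs)
  have hJpos : 0 < J := lt_of_lt_of_le (by positivity) hlow
  have hzag : 0 < z - a := by linarith
  have hLJle : L/J ≤ z - (a+g)/2 := by
    have h2 : (2/c) * L * (c/2) ≤ J * (c/2) :=
      mul_le_mul_of_nonneg_right hlow (by positivity)
    have h3 : (2/c) * L * (c/2) = L := by field_simp
    rw [h3, hc_def] at h2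
    rw [div_le_iff₀ hJpos]
    linarith [h2]
  have hLJge : z - a ≤ L/J := by
    have h2 : J * (z - a) ≤ (1/(z-a)) * L * (z - a) :=
      mul_le_mul_of_nonneg_right hup hzag.le
    have h3 : (1/(z-a)) * L * (z - a) = L := by
      field_simp
    rw [h3] at h2
    rw [le_div_iff₀ hJpos]
    linarith
  refine ⟨z - L/J, ?_, ?_, ?_, ?_⟩
  · have : g ≤ (a+g)/2 := by linarith
    linarith
  · linarith
  · -- the formula
    rw [hsub]
    have h1 : z - (z - L/J) = L/J := by ring
    rw [h1]
    rw [one_div, inv_div, div_mul_eq_mul_div, mul_div_assoc, div_self hL.ne', mul_one]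
  · -- strictness
    intro hxy'
    have hgalt : g < a := by
      rcases lt_or_eq_of_le hga with h | h
      · exact h
      · exfalso
        apply hxy'
        have h2 : g^2 = a^2 := by rw [h]
        rw [hg2, ha_def] at h2
        nlinarith [h2]
    have hA0' : 0 < a^2 - g^2 := by nlinarith
    have hD1s : ∀ s ∈ Set.Ioi (a + g), (s + α)*(s + β) < s^2 + 2*(z - a)*s + A := by
      intro s hs
      have h := hkey s
      have h2 := div_pos (mul_pos hA0' (hbr s hs)) (pow_pos hc 2)
      linarith
    have hstrict : J < (1/(z - a)) * L := by
      rw [← hval2, ← hJ_def]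
      have hdiff : 0 < ∫ s in Set.Ioi (a + g),
          (2/((s + α)*(s + β)) - 2 / (s^2 + 2*(z - a)*s + A)) := by
        rw [setIntegral_pos_iff_support_of_nonneg_ae]
        · have hsub' : Set.Ioi (a + g) ⊆ Function.support
              (fun s => 2/((s + α)*(s + β)) - 2 / (s^2 + 2*(z - a)*s + A)) := by
            intro s hs
            have h1 : 2 / (s^2 + 2*(z - a)*s + A) < 2/((s + α)*(s + β)) :=
              div_lt_div_of_pos_left two_pos (hprodpos s hs) (hD1s s hs)
            simp only [Function.mem_support]
            intro h
            rw [sub_eq_zero] at h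
            exact absurd h.symm (ne_of_lt h1)
          calc (0:ENNReal) < volume (Set.Ioi (a + g)) := by
                simp [Real.volume_Ioi]
            _ ≤ volume (Function.support
                  (fun s => 2/((s + α)*(s + β)) - 2 / (s^2 + 2*(z - a)*s + A))
                  ∩ Set.Ioi (a + g)) := by
                apply measure_mono
                intro s hs
                exact ⟨hsub' hs, hs⟩
        · filter_upwards [ae_restrict_mem measurableSet_Ioi] with s hs
          have h1 : 2 / (s^2 + 2*(z - a)*s + A) < 2/((s + α)*(s + β)) :=
            div_lt_div_of_pos_left two_pos (hprodpos s hs) (hD1s s hs)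
          simp only [Pi.zero_apply]
          linarith
        · exact hint2.sub hintG
      rw [integral_sub hint2 hintG] at hdiff
      linarith
    have h2 : J * (z - a) < (1/(z-a)) * L * (z - a) :=
      mul_lt_mul_of_pos_right hstrict hzag
    have h3 : (1/(z-a)) * L * (z - a) = L := by field_simp
    rw [h3] at h2
    have h4 : z - a < L/J := by
      rw [lt_div_iff₀ hJpos]
      linarith
    constructor
    · have : g < (a+g)/2 := by linarith
      linarith
    · linarith
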